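/- Chaitin's incompleteness bound: let W be a computably enumerable set of pairs (x, n), where x is a binary string and n ∈ ℕ, such that K(x) > n holds for every pair (x, n) ∈ W (the pairs represent provable true statements 'K(x) > n'). Then there exists a constant c such that n < c for every (x, n) ∈ W. -/

import Mathlib

/-!
An effective Berry paradox. Let `D` send a program of length `m` to the first string `x` found in
an enumeration of `W` with a certified bound `K(x) > n` for some `n ≥ 2m`. If the bounds in `W`
were unbounded, `D` would succeed on every length, and optimality of `U` gives
`K(x) ≤ K_D(x) + c ≤ m + c`. For `m = c` this yields `2c ≤ n < K(x) ≤ 2c`.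
-/

/-- Plain Kolmogorov complexity of `x` with respect to decompressor `D`. -/
noncomputable def Kc (D : List Bool →. List Bool) (x : List Bool) : ℕ∞ :=
  sInf {n : ℕ∞ | ∃ p : List Bool, x ∈ D p ∧ (p.length : ℕ∞) = n}

/-- `U` is an optimal decompressor. -/
def OptimalDecompressor (U : List Bool →. List Bool) : Prop :=
  Partrec U ∧ ∀ D : List Bool →. List Bool, Partrec D →
    ∃ c : ℕ, ∀ x : List Bool, Kc U x ≤ Kc D x + (c : ℕ∞)

open Encodable Nat.Partrec.Code

theorem Nat.Partrec.Code.exists_evaln_isSome_iff (c : Nat.Partrec.Code) (n : ℕ) :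
    (∃ s, (evaln s c n).isSome) ↔ (eval c n).Dom := by
  simp only [Part.dom_iff_mem, evaln_complete, Option.isSome_iff_exists, Option.mem_def]
  exact exists_comm

theorem REPred.exists_computable_enumeration {α : Type*} [Primcodable α] {p : α → Prop}
    (hp : REPred p) :
    ∃ e : ℕ → Option α, Computable e ∧ ∀ a, p a ↔ ∃ k, e k = some a := by
  obtain ⟨c, hc⟩ := exists_code.1 hp
  have halts_iff (n : ℕ) :
      (∃ s, (evaln s c n).isSome) ↔ ∃ a, decode n = some a ∧ p a := by
    rw [exists_evaln_isSome_iff, hc]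
    dsimp only
    cases decode (α := α) n <;> simp [Part.assert]
  -- Dovetailing: stage `k = ⟨s, n⟩` runs `c` on input `n` for `s` steps.
  refine ⟨fun k => (evaln k.unpair.1 c k.unpair.2).bind fun _ => decode k.unpair.2, ?_,
    fun a => ?_⟩
  · exact (Primrec.option_bind
      (primrec_evaln.comp (((Primrec.fst.comp Primrec.unpair).pair (Primrec.const c)).pair
        (Primrec.snd.comp Primrec.unpair)))
      (Primrec.decode.comp ((Primrec.snd.comp Primrec.unpair).comp Primrec.fst)).to₂).to_comp
  constructor
  · intro ha
    obtain ⟨s, hs⟩ := (halts_iff (encode a)).2 ⟨a, encodek a, ha⟩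
    refine ⟨Nat.pair s (encode a), ?_⟩
    obtain ⟨v, hv⟩ := Option.isSome_iff_exists.1 hs
    simp [hv]
  · rintro ⟨k, hk⟩
    obtain ⟨v, hv, hdec⟩ := Option.bind_eq_some_iff.1 hk
    obtain ⟨a', hdec', ha'⟩ :=
      (halts_iff k.unpair.2).1 ⟨_, Option.isSome_iff_exists.2 ⟨v, hv⟩⟩
    rwa [Option.some_inj.1 (hdec'.symm.trans hdec)] at ha'

theorem REPred.exists_partrec_select_ge {β : Type*} [Primcodable β] {W : Set (β × ℕ)}
    (hW : REPred (· ∈ W)) :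
    ∃ f : ℕ →. β, Partrec f ∧
      ∀ m, (∃ q ∈ W, m ≤ q.2) → ∃ x ∈ f m, ∃ n, (x, n) ∈ W ∧ m ≤ n := by
  obtain ⟨e, he, mem_W_iff⟩ := hW.exists_computable_enumeration
  let select (m k : ℕ) : Option β := (e k).bind fun q => if m ≤ q.2 then some q.1 else none
  have hselect : Computable₂ select :=
    Computable.option_bind (he.comp Computable.snd) (Primrec.ite
      (Primrec.nat_le.comp (Primrec.fst.comp Primrec.fst) (Primrec.snd.comp Primrec.snd))
      (Primrec.option_some.comp (Primrec.fst.comp Primrec.snd)) (Primrec.const none)).to_comp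
  refine ⟨fun m => Nat.rfindOpt (select m), Partrec.rfindOpt hselect, ?_⟩
  rintro m ⟨q, hqW, hmq⟩
  obtain ⟨k, hk⟩ := (mem_W_iff q).1 hqW
  have hdom : (Nat.rfindOpt (select m)).Dom :=
    Nat.rfindOpt_dom.2 ⟨k, q.1, by simp [select, hk, hmq]⟩
  refine ⟨_, Part.get_mem hdom, ?_⟩
  obtain ⟨k', hk'⟩ := Nat.rfindOpt_spec (Part.get_mem hdom)
  obtain ⟨q', hq', hsel⟩ := Option.bind_eq_some_iff.1 hk'
  split_ifs at hsel with hle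
  rw [← Option.some_inj.1 hsel]
  exact ⟨q'.2, (mem_W_iff q').2 ⟨k', hq'⟩, hle⟩

theorem Kc_le_length {D : List Bool →. List Bool} {p x : List Bool} (h : x ∈ D p) :
    Kc D x ≤ p.length :=
  sInf_le ⟨p, h, rfl⟩

/-- Chaitin's incompleteness bound: if `W` is a computably enumerable set of
pairs `(x, n)` such that `K(x) > n` for every `(x, n) ∈ W`, then there is a
constant `c` with `n < c` for every `(x, n) ∈ W`. -/
theorem chaitin_incompleteness
    (U : List Bool →. List Bool) (hU : OptimalDecompressor U)
    (W : Set (List Bool × ℕ)) (hW : REPred (· ∈ W))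
    (htrue : ∀ p ∈ W, ((p.2 : ℕ∞)) < Kc U p.1) :
    ∃ c : ℕ, ∀ p ∈ W, p.2 < c := by
  obtain ⟨f, hf, hf_select⟩ := hW.exists_partrec_select_ge
  let D : List Bool →. List Bool := fun p => f (2 * p.length)
  have hD : Partrec D :=
    hf.comp (Primrec.nat_mul.comp (Primrec.const 2) Primrec.list_length).to_comp
  obtain ⟨c, hc⟩ := hU.2 D hD
  by_contra! hW_unbounded
  obtain ⟨x, hx, n, hxW, hn⟩ := hf_select (2 * c) (hW_unbounded (2 * c))
  have hxD : x ∈ D (List.replicate c false) := by simpa [D] using hx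
  have hn_lt : (n : ℕ∞) < 2 * c :=
    calc (n : ℕ∞) < Kc U x := htrue _ hxW
      _ ≤ Kc D x + c := hc x
      _ ≤ c + c := by gcongr; simpa using Kc_le_length hxD
      _ = 2 * c := (two_mul _).symm
  exact hn.not_gt (by exact_mod_cast hn_lt)
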